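/- For every r ≥ 2 and integer 1 ≤ t ≤ r-1, the number of splittable r-patterns whose unique block decomposition ends in the block A^t B^t, plus the number ending in B^t A^t, equals 2 · 3^{r-t-1}; and there is exactly one splittable r-pattern (namely A^r B^r) whose decomposition consists of the single block of size 2r. -/

import Mathlib

/-!
A splittable word ends in a unique block `XᵗYᵗ`, and `t` is the length of its last run.
Removing that block leaves a splittable word of length `2(r - t)`, which for `t < r` still
starts with `A`; conversely any block may be appended. So for `t < r` the patterns ending
in `AᵗBᵗ`, and likewise those ending in `BᵗAᵗ`, correspond to the splittable
`(r - t)`-patterns, while for `t = r` the word is forced to be `AʳBʳ`. Writing `G r` for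
the number of splittable `r`-patterns, this gives `G r = 1 + 2 ∑_{s < r} G s`, hence
`G r = 3 ^ (r - 1)`.
-/

/-- The word `w` can be partitioned into consecutive blocks, each being a run of one
letter followed by an equal-length run of the other letter. -/
def Splittable (r : ℕ) (w : ℕ → Bool) : Prop :=
  ∃ (k : ℕ) (c : ℕ → ℕ), c 0 = 0 ∧ c k = 2 * r ∧
    ∀ i < k, ∃ t, 1 ≤ t ∧ c (i + 1) = c i + 2 * t ∧
      (∀ j, c i ≤ j → j < c i + t → w j = w (c i)) ∧
      (∀ j, c i + t ≤ j → j < c i + 2 * t → w j = !(w (c i)))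

/-- Extend a word on `Fin (2*r)` to `ℕ` by `false`. -/
def extWord (r : ℕ) (p : Fin (2 * r) → Bool) : ℕ → Bool :=
  fun j => if h : j < 2 * r then p ⟨j, h⟩ else false

/-- Length of the last maximal run of a word of length `2r`. -/
def lastRunLen (r : ℕ) (w : ℕ → Bool) : ℕ :=
  ((Finset.range (2 * r)).filter
    (fun j => ∀ i, j ≤ i → i < 2 * r → w i = w (2 * r - 1))).card


def IsBlock (w : ℕ → Bool) (a t : ℕ) : Prop :=
  (∀ j, a ≤ j → j < a + t → w j = w a) ∧
    (∀ j, a + t ≤ j → j < a + 2 * t → w j = !w a)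

theorem IsBlock.congr {w w' : ℕ → Bool} {a t : ℕ} (h : ∀ j < a + 2 * t, w j = w' j)
    (hb : IsBlock w a t) : IsBlock w' a t := by
  refine ⟨fun j hj hj' => ?_, fun j hj hj' => ?_⟩
  · rw [← h j (by omega), ← h a (by omega), hb.1 j hj hj']
  · rw [← h j hj', ← h a (by omega), hb.2 j hj hj']

theorem splittable_zero (w : ℕ → Bool) : Splittable 0 w :=
  ⟨0, fun _ => 0, rfl, rfl, fun _ h => absurd h (Nat.not_lt_zero _)⟩

theorem Splittable.snoc {n t : ℕ} {w : ℕ → Bool} (hs : Splittable n w) (ht : 1 ≤ t)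
    (hb : IsBlock w (2 * n) t) : Splittable (n + t) w := by
  obtain ⟨k, c, hc0, hck, hstep⟩ := hs
  refine ⟨k + 1, fun i => if i ≤ k then c i else 2 * (n + t), by simp [hc0], by simp, ?_⟩
  intro i hi
  rcases Nat.lt_succ_iff_lt_or_eq.1 hi with hi | rfl
  · simpa [hi.le, Nat.succ_le_of_lt hi] using hstep i hi
  · refine ⟨t, ht, ?_⟩
    simp only [le_refl, if_true, show ¬ i + 1 ≤ i by omega, if_false, hck]
    exact ⟨by ring, hb⟩

theorem Splittable.exists_isBlock {r : ℕ} {w : ℕ → Bool} (hs : Splittable r w)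
    (hr : r ≠ 0) :
    ∃ n t, 1 ≤ t ∧ r = n + t ∧ Splittable n w ∧ IsBlock w (2 * n) t := by
  obtain ⟨k, c, hc0, hck, hstep⟩ := hs
  obtain ⟨k, rfl⟩ : ∃ k', k = k' + 1 := Nat.exists_eq_succ_of_ne_zero (by rintro rfl; omega)
  obtain ⟨t, ht, hck', hb⟩ := hstep k k.lt_succ_self
  refine ⟨r - t, t, ht, by omega, ⟨k, c, hc0, by omega, fun i hi => hstep i (by omega)⟩, ?_⟩
  rwa [show 2 * (r - t) = c k by omega]

theorem Splittable.congr {r : ℕ} {w w' : ℕ → Bool} (h : ∀ j < 2 * r, w j = w' j)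
    (hs : Splittable r w) : Splittable r w' := by
  induction r using Nat.strong_induction_on with
  | _ r ih =>
    rcases eq_or_ne r 0 with rfl | hr
    · exact splittable_zero w'
    obtain ⟨n, t, ht, rfl, hn, hb⟩ := hs.exists_isBlock hr
    exact (ih n (by omega) (fun j hj => h j (by omega)) hn).snoc ht
      (hb.congr fun j hj => h j (by omega))

theorem IsBlock.lastRunLen_eq {w : ℕ → Bool} {n t : ℕ} (ht : 1 ≤ t)
    (hb : IsBlock w (2 * n) t) : lastRunLen (n + t) w = t := by
  have hlast : w (2 * (n + t) - 1) = !w (2 * n) := hb.2 _ (by omega) (by omega)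
  have hrun : (Finset.range (2 * (n + t))).filter
      (fun j => ∀ i, j ≤ i → i < 2 * (n + t) → w i = w (2 * (n + t) - 1)) =
      Finset.Ico (2 * n + t) (2 * (n + t)) := by
    ext j
    simp only [Finset.mem_filter, Finset.mem_range, Finset.mem_Ico, hlast]
    constructor
    · rintro ⟨hj, hall⟩
      refine ⟨?_, hj⟩
      by_contra! hj'
      have := hall (2 * n + t - 1) (by omega) (by omega)
      rw [hb.1 _ (by omega) (by omega)] at this
      exact Bool.eq_not_self _ |>.mp this
    · rintro ⟨hj, hj'⟩
      exact ⟨hj', fun i hi hi' => hb.2 i (by omega) (by omega)⟩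
  rw [lastRunLen, hrun, Nat.card_Ico]
  omega

theorem splittable_and_lastRunLen_iff {n t : ℕ} {w : ℕ → Bool} (ht : 1 ≤ t) :
    Splittable (n + t) w ∧ lastRunLen (n + t) w = t ↔
      Splittable n w ∧ IsBlock w (2 * n) t := by
  constructor
  · rintro ⟨hs, hlen⟩
    obtain ⟨n', t', ht', hnt, hn', hb'⟩ := hs.exists_isBlock (by omega)
    obtain rfl : t' = t := by rw [← hlen, hnt, hb'.lastRunLen_eq ht']
    obtain rfl : n' = n := by omega
    exact ⟨hn', hb'⟩
  · rintro ⟨hn, hb⟩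
    exact ⟨hn.snoc ht hb, hb.lastRunLen_eq ht⟩

theorem isBlock_and_last_iff {w : ℕ → Bool} {a t : ℕ} (b : Bool) (ht : 1 ≤ t) :
    IsBlock w a t ∧ w (a + 2 * t - 1) = b ↔
      ∀ j, a ≤ j → j < a + 2 * t → w j = if j < a + t then !b else b := by
  constructor
  · rintro ⟨hb, rfl⟩ j hj hj'
    rw [hb.2 (a + 2 * t - 1) (by omega) (by omega)]
    split_ifs with hjt
    · rw [hb.1 j hj hjt, Bool.not_not]
    · exact hb.2 j (by omega) hj'
  · intro h
    have ha : w a = !b := by simpa [show a < a + t by omega] using h a le_rfl (by omega)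
    refine ⟨⟨fun j hj hj' => ?_, fun j hj hj' => ?_⟩, ?_⟩
    · simpa [hj', ha] using h j hj (by omega)
    · simpa [show ¬ j < a + t by omega, ha] using h j (by omega) hj'
    · simpa [show ¬ a + 2 * t - 1 < a + t by omega]
        using h (a + 2 * t - 1) (by omega) (by omega)

theorem extWord_of_lt {r j : ℕ} (p : Fin (2 * r) → Bool) (hj : j < 2 * r) :
    extWord r p j = p ⟨j, hj⟩ := dif_pos hj

theorem card_extWord_prefix {n r : ℕ} (hnr : n ≤ r) (Q : (ℕ → Bool) → Prop)
    (hQ : ∀ w w', (∀ j < 2 * n, w j = w' j) → Q w → Q w') (u : ℕ → Bool) :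
    Nat.card {p : Fin (2 * r) → Bool //
        Q (extWord r p) ∧ ∀ j, 2 * n ≤ j → j < 2 * r → extWord r p j = u j} =
      Nat.card {q : Fin (2 * n) → Bool // Q (extWord n q)} := by
  have hle : 2 * n ≤ 2 * r := by omega
  let glue (q : Fin (2 * n) → Bool) : Fin (2 * r) → Bool :=
    fun j => if h : (j : ℕ) < 2 * n then q ⟨j, h⟩ else u j
  have ext_restrict (p : Fin (2 * r) → Bool) :
      ∀ j < 2 * n, extWord r p j = extWord n (p ∘ Fin.castLE hle) j := fun j hj => by
    rw [extWord_of_lt _ hj, extWord_of_lt _ (by omega)]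
    rfl
  have ext_glue (q : Fin (2 * n) → Bool) :
      ∀ j < 2 * n, extWord n q j = extWord r (glue q) j := fun j hj => by
    rw [extWord_of_lt _ hj, extWord_of_lt _ (by omega)]
    simp [glue, hj]
  refine Nat.card_congr
    { toFun := fun p => ⟨p.1 ∘ Fin.castLE hle, hQ _ _ (ext_restrict p.1) p.2.1⟩
      invFun := fun q => ⟨glue q.1, hQ _ _ (ext_glue q.1) q.2, fun j hj hj' => ?_⟩
      left_inv := fun p => Subtype.ext (funext fun j => ?_)
      right_inv := fun q => Subtype.ext (funext fun j => by simp [glue]) }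
  · simp [extWord_of_lt _ hj', glue, show ¬ j < 2 * n by omega]
  · by_cases hj : (j : ℕ) < 2 * n
    · simp [glue, hj]
    · simpa [glue, hj, extWord_of_lt _ j.2] using (p.2.2 j (by omega) j.2).symm

theorem Nat.card_subtype_eq_sum_card_fiberwise {α β : Type*} [Fintype α] [DecidableEq β]
    {P : α → Prop} {f : α → β} {s : Finset β} (H : ∀ x, P x → f x ∈ s) :
    Nat.card {x // P x} = ∑ b ∈ s, Nat.card {x // P x ∧ f x = b} := by
  classical
  simp only [Nat.card_eq_fintype_card, Fintype.card_subtype]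
  rw [Finset.card_eq_sum_card_fiberwise (f := f) (t := s) (fun x hx => H x (by simpa using hx))]
  simp [Finset.filter_filter]

theorem card_patterns_lastRunLen_eq_last_eq (n t : ℕ) (hn : 1 ≤ n) (ht : 1 ≤ t) (b : Bool) :
    Nat.card {p : Fin (2 * (n + t)) → Bool //
        extWord (n + t) p 0 = true ∧ Splittable (n + t) (extWord (n + t) p) ∧
        lastRunLen (n + t) (extWord (n + t) p) = t ∧
        extWord (n + t) p (2 * (n + t) - 1) = b} =
      Nat.card {q : Fin (2 * n) → Bool //
        extWord n q 0 = true ∧ Splittable n (extWord n q)} := by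
  rw [← card_extWord_prefix (r := n + t) (by omega) (fun w => w 0 = true ∧ Splittable n w)
    (fun w w' h hw => ⟨(h 0 (by omega)).symm.trans hw.1, hw.2.congr h⟩)
    (fun j => if j < 2 * n + t then !b else b)]
  refine Nat.card_congr (Equiv.subtypeEquivRight fun p => ?_)
  rw [← and_assoc (a := Splittable _ _), splittable_and_lastRunLen_iff ht, and_assoc,
    show 2 * (n + t) - 1 = 2 * n + 2 * t - 1 by omega, isBlock_and_last_iff b ht, mul_add,
    and_assoc]

theorem lastRunLen_eq_self_iff {m : ℕ} {w : ℕ → Bool} (hm : 1 ≤ m) :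
    w 0 = true ∧ Splittable m w ∧ lastRunLen m w = m ↔
      ∀ j < 2 * m, w j = decide (j < m) := by
  have h := splittable_and_lastRunLen_iff (n := 0) (w := w) hm
  rw [zero_add, mul_zero] at h
  rw [h, and_iff_right (splittable_zero w)]
  constructor
  · rintro ⟨h0, hb⟩ j hj
    by_cases hjm : j < m
    · simpa [hjm, h0] using hb.1 j (Nat.zero_le j) (by omega)
    · simpa [hjm, h0] using hb.2 j (by omega) (by omega)
  · intro h
    have h0 : w 0 = true := by rw [h 0 (by omega), decide_eq_true_iff]; omega
    refine ⟨h0, fun j _ hj => ?_, fun j hj hj' => ?_⟩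
    · simpa [h j (by omega), h0] using hj
    · simpa [h j (by omega), h0] using hj

theorem card_patterns_lastRunLen_eq_self (m : ℕ) (hm : 1 ≤ m) :
    Nat.card {p : Fin (2 * m) → Bool //
        extWord m p 0 = true ∧ Splittable m (extWord m p) ∧
        lastRunLen m (extWord m p) = m} = 1 := by
  refine Nat.card_eq_one_iff_exists.2 ⟨⟨fun j => decide ((j : ℕ) < m),
    (lastRunLen_eq_self_iff hm).2 fun j hj => by simp [extWord_of_lt _ hj]⟩,
    fun p => Subtype.ext (funext fun j => ?_)⟩
  simpa [extWord_of_lt _ j.2] using (lastRunLen_eq_self_iff hm).1 p.2 j j.2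

theorem card_patterns_lastRunLen_eq (n t : ℕ) (hn : 1 ≤ n) (ht : 1 ≤ t) :
    Nat.card {p : Fin (2 * (n + t)) → Bool //
        extWord (n + t) p 0 = true ∧ Splittable (n + t) (extWord (n + t) p) ∧
        lastRunLen (n + t) (extWord (n + t) p) = t} =
      2 * Nat.card {q : Fin (2 * n) → Bool //
        extWord n q 0 = true ∧ Splittable n (extWord n q)} := by
  rw [Nat.card_subtype_eq_sum_card_fiberwise (s := Finset.univ)
    (f := fun p => extWord (n + t) p (2 * (n + t) - 1)) fun _ _ => Finset.mem_univ _,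
    Fintype.sum_bool]
  simp only [and_assoc]
  rw [card_patterns_lastRunLen_eq_last_eq n t hn ht,
    card_patterns_lastRunLen_eq_last_eq n t hn ht]
  exact (two_mul _).symm

theorem sum_Icc_two_mul_three_pow (k : ℕ) :
    ∑ t ∈ Finset.Icc 1 k, 2 * 3 ^ (k - t) + 1 = 3 ^ k := by
  induction k with
  | zero => simp
  | succ k ih =>
    rw [Finset.sum_Icc_succ_top (by omega), Nat.sub_self, pow_zero,
      Finset.sum_congr rfl fun t ht => by
        rw [show k + 1 - t = k - t + 1 by simp at ht; omega, pow_succ, ← mul_assoc],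
      ← Finset.sum_mul, pow_succ, ← ih]
    ring

theorem card_patterns (k : ℕ) :
    Nat.card {p : Fin (2 * (k + 1)) → Bool //
        extWord (k + 1) p 0 = true ∧ Splittable (k + 1) (extWord (k + 1) p)} = 3 ^ k := by
  induction k using Nat.strong_induction_on with
  | _ k ih =>
    have fiber : ∀ t ∈ Finset.Icc 1 k,
        Nat.card {p : Fin (2 * (k + 1)) → Bool // extWord (k + 1) p 0 = true ∧
          Splittable (k + 1) (extWord (k + 1) p) ∧ lastRunLen (k + 1) (extWord (k + 1) p) = t} =
        2 * 3 ^ (k - t) := by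
      intro t ht
      rw [Finset.mem_Icc] at ht
      obtain ⟨n, hn⟩ : ∃ n, k + 1 = n + 1 + t := ⟨k - t, by omega⟩
      rw [hn, card_patterns_lastRunLen_eq _ _ (by omega) ht.1, ih n (by omega),
        show k - t = n by omega]
    rw [Nat.card_subtype_eq_sum_card_fiberwise (s := Finset.Icc 1 (k + 1))
      (f := fun p => lastRunLen (k + 1) (extWord (k + 1) p)) ?_]
    · simp only [and_assoc]
      rw [Finset.sum_Icc_succ_top (by omega), Finset.sum_congr rfl fiber,
        card_patterns_lastRunLen_eq_self _ (by omega), sum_Icc_two_mul_three_pow]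
    · rintro p ⟨-, hs⟩
      obtain ⟨n, t, ht, hnt, -, hb⟩ := hs.exists_isBlock (Nat.succ_ne_zero k)
      have hlen := hb.lastRunLen_eq ht
      rw [← hnt] at hlen
      simp only [hlen, Finset.mem_Icc]
      omega

theorem stmt_8_general (r t : ℕ) (ht1 : 1 ≤ t) (ht2 : t ≤ r - 1) :
    (Nat.card {p : Fin (2 * r) → Bool //
          extWord r p 0 = true ∧ Splittable r (extWord r p) ∧
          lastRunLen r (extWord r p) = t ∧ extWord r p (2 * r - 1) = false} +
      Nat.card {p : Fin (2 * r) → Bool //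
          extWord r p 0 = true ∧ Splittable r (extWord r p) ∧
          lastRunLen r (extWord r p) = t ∧ extWord r p (2 * r - 1) = true}
        = 2 * 3 ^ (r - t - 1)) ∧
    Nat.card {p : Fin (2 * r) → Bool //
        extWord r p 0 = true ∧ Splittable r (extWord r p) ∧
        lastRunLen r (extWord r p) = r} = 1 := by
  obtain ⟨k, rfl⟩ : ∃ k, r = k + 1 + t := ⟨r - t - 1, by omega⟩
  refine ⟨?_, card_patterns_lastRunLen_eq_self _ (by omega)⟩
  rw [card_patterns_lastRunLen_eq_last_eq _ _ (by omega) ht1,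
    card_patterns_lastRunLen_eq_last_eq _ _ (by omega) ht1, card_patterns,
    show k + 1 + t - t - 1 = k by omega, two_mul]

/-- For `1 ≤ t ≤ r-1`, the number of splittable `r`-patterns whose unique block
decomposition ends in the block `AᵗBᵗ` (equivalently, last maximal run of length `t`
consisting of B's) plus the number ending in `BᵗAᵗ` equals `2·3^(r-t-1)`; and there
is exactly one splittable `r`-pattern whose decomposition is a single block of size
`2r` (namely `AʳBʳ`, equivalently last maximal run of length `r`). -/
theorem stmt_8 (r t : ℕ) (hr : 2 ≤ r) (ht1 : 1 ≤ t) (ht2 : t ≤ r - 1) :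
    (Nat.card {p : Fin (2 * r) → Bool //
          extWord r p 0 = true ∧ Splittable r (extWord r p) ∧
          lastRunLen r (extWord r p) = t ∧ extWord r p (2 * r - 1) = false} +
      Nat.card {p : Fin (2 * r) → Bool //
          extWord r p 0 = true ∧ Splittable r (extWord r p) ∧
          lastRunLen r (extWord r p) = t ∧ extWord r p (2 * r - 1) = true}
        = 2 * 3 ^ (r - t - 1)) ∧
    Nat.card {p : Fin (2 * r) → Bool //
        extWord r p 0 = true ∧ Splittable r (extWord r p) ∧
        lastRunLen r (extWord r p) = r} = 1 :=
  stmt_8_general r t ht1 ht2
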